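/- Let d = mJ with m > 1, let W ⊂ ℤ_m, and let Ω = ∪_{r∈W} (mℤ_d + r) ⊂ ℤ_d. If there exists a circular convolution operator A ∈ ℬ_L such that Y = {e_i, A e_i, …, A^{m−1} e_i : i ∈ Ω} is a frame for ℓ²(ℤ_d), then |W| ≥ L. More generally, if Ω is an admissible set for some A ∈ ℬ_L (i.e., there exist nonnegative integers l_i, i ∈ Ω, making {e_i, A e_i, …, A^{l_i} e_i : i ∈ Ω} a frame), then |W| ≥ L. -/

import Mathlib

/-!
Write `ψ` for the standard additive character of `ℤ_d`. Under the Fourier transform the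
convolution operator `A` becomes multiplication by `â`, so `A^n e_i` becomes
`ω ↦ â(ω)^n ψ(-iω)`. Fix `k < J` and a value `λ`, and let `S` be the set of `s < m` with
`â(k + sJ) = λ`. Restricting Fourier transforms to the frequencies `k + sJ`, `s ∈ S`, is a
surjection onto `ℂ^S` sending `A^n e_i` to a multiple of the vector `s ↦ ψ(-isJ)`, which
depends only on `i mod m`. A frame is therefore mapped to a spanning family of at most `|W|`
lines, so `|S| ≤ |W|`; taking the maximum over `k` and `λ` gives `L ≤ |W|`.
-/

open Matrix

/-- Unnormalized discrete Fourier transform of `a : ZMod d → ℂ`. -/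
noncomputable def hatKer (d : ℕ) [NeZero d] (a : ZMod d → ℂ) : ZMod d → ℂ :=
  fun j => ∑ k : ZMod d,
    a k * Complex.exp (-(2 * (Real.pi : ℂ) * Complex.I) * ((j.val : ℂ) * (k.val : ℂ)) / (d : ℂ))

/-- The circular convolution operator with kernel `a`, as a matrix. -/
def convMat (d : ℕ) (a : ZMod d → ℂ) : Matrix (ZMod d) (ZMod d) ℂ :=
  Matrix.of fun k i => a (k - i)

/-- The normalized discrete Fourier matrix `F_d`. -/
noncomputable def FdMat (d : ℕ) : Matrix (ZMod d) (ZMod d) ℂ :=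
  Matrix.of fun j k =>
    ((Real.sqrt d : ℝ) : ℂ)⁻¹ *
      Complex.exp (-(2 * (Real.pi : ℂ) * Complex.I) * ((j.val : ℂ) * (k.val : ℂ)) / (d : ℂ))

/-- With `d = mJ` and `a_k = (â(k), â(k+J), …, â(k+(m-1)J))`, this is
`max_{k<J} M_{D_k}`, the largest number of equal entries among the `a_k`'s. -/
noncomputable def maxMultB (d m J : ℕ) [NeZero d] (b : ZMod d → ℂ) : ℕ :=
  (Finset.range J).sup fun k =>
    (Finset.range m).sup fun t =>
      Nat.card {s : ℕ | s < m ∧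
        b (((k + s * J : ℕ) : ZMod d)) = b (((k + t * J : ℕ) : ZMod d))}

open ZMod

section Fourier

variable {N : ℕ} [NeZero N]

lemma hatKer_eq_dft (a : ZMod N → ℂ) : hatKer N a = 𝓕 a := by
  ext j
  refine Finset.sum_congr rfl fun k _ => ?_
  have hcast : -(k * j) = ((-(k.val * j.val : ℕ) : ℤ) : ZMod N) := by
    push_cast
    rw [natCast_zmod_val, natCast_zmod_val]
  rw [smul_eq_mul, mul_comm, hcast, stdAddChar_coe]
  congr 2
  push_cast
  ring

lemma dft_single (i j : ZMod N) : 𝓕 (Pi.single i (1 : ℂ)) j = stdAddChar (-(i * j)) := by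
  simp [dft_apply, Pi.single_apply]

lemma dft_convMat_mulVec (a v : ZMod N → ℂ) : 𝓕 (convMat N a *ᵥ v) = 𝓕 a * 𝓕 v := by
  ext j
  simp only [dft_apply, Pi.mul_apply, smul_eq_mul, mulVec, dotProduct, convMat, of_apply]
  calc ∑ x, stdAddChar (-(x * j)) * ∑ i, a (x - i) * v i
      = ∑ i, ∑ x, stdAddChar (-(x * j)) * (a (x - i) * v i) := by
        simp only [Finset.mul_sum]
        exact Finset.sum_comm
    _ = ∑ i, ∑ y, stdAddChar (-((y + i) * j)) * (a y * v i) := by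
        refine Finset.sum_congr rfl fun i _ => ?_
        exact (Fintype.sum_equiv (Equiv.addRight i) _ _ fun y => by simp).symm
    _ = (∑ y, stdAddChar (-(y * j)) * a y) * ∑ i, stdAddChar (-(i * j)) * v i := by
        rw [Finset.sum_mul_sum, Finset.sum_comm]
        refine Finset.sum_congr rfl fun i _ => Finset.sum_congr rfl fun y _ => ?_
        rw [add_mul, neg_add, AddChar.map_add_eq_mul]
        ring

lemma dft_convMat_pow_mulVec (a v : ZMod N → ℂ) (n : ℕ) :
    𝓕 (convMat N a ^ n *ᵥ v) = 𝓕 a ^ n * 𝓕 v := by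
  induction n with
  | zero => simp
  | succ n ih => rw [pow_succ', ← mulVec_mulVec, dft_convMat_mulVec, ih, pow_succ']; ring

lemma span_dft_chars_eq_top {ι : Type*} {ω : ι → ZMod N} (hω : ω.Injective)
    {a : ZMod N → ℂ} {c : ℂ} (hc : ∀ s, 𝓕 a (ω s) = c) (P : ZMod N → Prop) (l : ZMod N → ℕ)
    (hspan : Submodule.span ℂ
      {v | ∃ i, P i ∧ ∃ n ≤ l i, v = convMat N a ^ n *ᵥ Pi.single i 1} = ⊤) :
    Submodule.span ℂ ((fun i s => stdAddChar (-(i * ω s))) '' {i | P i}) = ⊤ := by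
  set T := LinearMap.funLeft ℂ ℂ ω ∘ₗ (𝓕 : (ZMod N → ℂ) ≃ₗ[ℂ] (ZMod N → ℂ)).toLinearMap
  have hT : Function.Surjective T := by
    rw [LinearMap.coe_comp, LinearEquiv.coe_coe]
    exact (LinearMap.funLeft_surjective_of_injective ℂ ℂ ω hω).comp (LinearEquiv.surjective _)
  have hTpow (i : ZMod N) (n : ℕ) : T (convMat N a ^ n *ᵥ Pi.single i 1) =
      c ^ n • fun s => stdAddChar (-(i * ω s)) := by
    ext s
    change 𝓕 (convMat N a ^ n *ᵥ Pi.single i 1) (ω s) = c ^ n * stdAddChar (-(i * ω s))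
    rw [dft_convMat_pow_mulVec, Pi.mul_apply, Pi.pow_apply, hc, dft_single]
  rw [eq_top_iff, ← LinearMap.range_eq_top.mpr hT, LinearMap.range_eq_map, ← hspan,
    Submodule.map_span, Submodule.span_le]
  rintro _ ⟨_, ⟨i, hi, n, -, rfl⟩, rfl⟩
  rw [hTpow]
  exact Submodule.smul_mem _ _ (Submodule.subset_span ⟨i, hi, rfl⟩)

end Fourier

lemma mul_natCast_eq_val_mod_mul {m J : ℕ} [NeZero (m * J)] (x : ZMod (m * J)) :
    x * (J : ZMod (m * J)) = ((x.val % m : ℕ) : ZMod (m * J)) * J := by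
  conv_lhs => rw [← natCast_zmod_val x]
  rw [← Nat.cast_mul, ← Nat.cast_mul, natCast_eq_natCast_iff]
  exact (Nat.mod_modEq _ _).symm.mul_right' J

lemma natCast_add_mul_injOn {m J k : ℕ} (hk : k < J) :
    Set.InjOn (fun s : ℕ => ((k + s * J : ℕ) : ZMod (m * J))) {s | s < m} := by
  have hval {s : ℕ} (hs : s < m) : ((k + s * J : ℕ) : ZMod (m * J)).val = k + s * J :=
    val_cast_of_lt (by nlinarith)
  intro s hs s' hs' h
  have := congrArg ZMod.val h
  rw [hval hs, hval hs'] at this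
  exact Nat.eq_of_mul_eq_mul_right (show 0 < J by omega) (by omega)

lemma card_dft_level_set_le {m J : ℕ} [NeZero (m * J)] (W : Finset (ZMod m))
    (a : ZMod (m * J) → ℂ) (l : ZMod (m * J) → ℕ)
    (hspan : Submodule.span ℂ {v | ∃ i : ZMod (m * J), (i.val : ZMod m) ∈ W ∧
      ∃ n ≤ l i, v = convMat (m * J) a ^ n *ᵥ Pi.single i 1} = ⊤)
    {k : ℕ} (hk : k < J) (c : ℂ) :
    Nat.card {s : ℕ | s < m ∧ 𝓕 a ((k + s * J : ℕ) : ZMod (m * J)) = c} ≤ W.card := by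
  set S := {s : ℕ | s < m ∧ 𝓕 a ((k + s * J : ℕ) : ZMod (m * J)) = c}
  have : Fintype S := ((Set.finite_lt_nat m).subset fun _ hs => hs.1).fintype
  set ω : S → ZMod (m * J) := fun s => ((k + (s : ℕ) * J : ℕ) : ZMod (m * J))
  have hω : ω.Injective := fun s s' h =>
    Subtype.ext (natCast_add_mul_injOn hk s.2.1 s'.2.1 h)
  have hχ := span_dft_chars_eq_top hω (fun s => s.2.2) _ l hspan
  set φ : W → (S → ℂ) := fun r s =>
    stdAddChar (-(((s : ℕ) : ZMod (m * J)) * ((r.1.val : ZMod (m * J)) * (J : ZMod (m * J)))))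
  have hφ : Submodule.span ℂ (Set.range φ) = ⊤ := by
    rw [eq_top_iff, ← hχ, Submodule.span_le]
    rintro _ ⟨i, hi, rfl⟩
    have hfactor : (fun s => stdAddChar (-(i * ω s))) =
        stdAddChar (-(i * (k : ZMod (m * J)))) • φ ⟨(i.val : ZMod m), hi⟩ := by
      ext s
      simp only [ω, φ, Pi.smul_apply, smul_eq_mul, val_natCast]
      rw [← mul_natCast_eq_val_mod_mul, ← AddChar.map_add_eq_mul]
      congr 1
      push_cast
      ring
    beta_reduce
    rw [SetLike.mem_coe, hfactor]
    exact Submodule.smul_mem _ _ (Submodule.subset_span ⟨_, rfl⟩)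
  calc Nat.card S = Module.finrank ℂ (S → ℂ) := by simp
    _ ≤ Fintype.card W := finrank_le_of_span_eq_top hφ
    _ = W.card := Fintype.card_coe W

lemma maxMultB_le_card_of_span_eq_top {m J : ℕ} [NeZero (m * J)] (W : Finset (ZMod m))
    (a : ZMod (m * J) → ℂ) (l : ZMod (m * J) → ℕ)
    (hspan : Submodule.span ℂ {v | ∃ i : ZMod (m * J), (i.val : ZMod m) ∈ W ∧
      ∃ n ≤ l i, v = convMat (m * J) a ^ n *ᵥ Pi.single i 1} = ⊤) :
    maxMultB (m * J) m J (hatKer (m * J) a) ≤ W.card := by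
  rw [hatKer_eq_dft]
  exact Finset.sup_le fun k hk => Finset.sup_le fun t _ =>
    card_dft_level_set_le W a l hspan (Finset.mem_range.mp hk) _

theorem stmt9_general (d m J L : ℕ) [NeZero d] (hd : d = m * J)
    (W : Finset (ZMod m)) :
    ((∃ a : ZMod d → ℂ, maxMultB d m J (hatKer d a) = L ∧
        Submodule.span ℂ {v : ZMod d → ℂ | ∃ i : ZMod d, ((i.val : ZMod m) ∈ W) ∧
          ∃ n ≤ m - 1, v = (convMat d a) ^ n *ᵥ (Pi.single i 1 : ZMod d → ℂ)} = ⊤)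
      → L ≤ W.card) ∧
    ((∃ a : ZMod d → ℂ, maxMultB d m J (hatKer d a) = L ∧
        ∃ l : ZMod d → ℕ,
          Submodule.span ℂ {v : ZMod d → ℂ | ∃ i : ZMod d, ((i.val : ZMod m) ∈ W) ∧
            ∃ n ≤ l i, v = (convMat d a) ^ n *ᵥ (Pi.single i 1 : ZMod d → ℂ)} = ⊤)
      → L ≤ W.card) := by
  subst hd
  exact ⟨fun ⟨a, hL, hspan⟩ => hL ▸ maxMultB_le_card_of_span_eq_top W a _ hspan,
    fun ⟨a, hL, l, hspan⟩ => hL ▸ maxMultB_le_card_of_span_eq_top W a l hspan⟩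

/-- with `d = mJ`, `m > 1`, `W ⊂ ℤ_m` and `Ω = ∪_{r ∈ W} (mℤ_d + r)`
(i.e. `i ∈ Ω ↔ i mod m ∈ W`): (first part) if `Y = {A^n e_i : i ∈ Ω, n ≤ m - 1}` is a
frame for some `A ∈ ℬ_L`, then `|W| ≥ L`; (second, more general part) if `Ω` is
admissible for some `A ∈ ℬ_L`, i.e. some choice of `l_i` makes
`{A^n e_i : i ∈ Ω, n ≤ l_i}` a frame, then `|W| ≥ L`. -/
theorem stmt9 (d m J L : ℕ) [NeZero d] [NeZero m] (hm : 1 < m) (hd : d = m * J)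
    (W : Finset (ZMod m)) :
    ((∃ a : ZMod d → ℂ, maxMultB d m J (hatKer d a) = L ∧
        Submodule.span ℂ {v : ZMod d → ℂ | ∃ i : ZMod d, ((i.val : ZMod m) ∈ W) ∧
          ∃ n ≤ m - 1, v = (convMat d a) ^ n *ᵥ (Pi.single i 1 : ZMod d → ℂ)} = ⊤)
      → L ≤ W.card) ∧
    ((∃ a : ZMod d → ℂ, maxMultB d m J (hatKer d a) = L ∧
        ∃ l : ZMod d → ℕ,
          Submodule.span ℂ {v : ZMod d → ℂ | ∃ i : ZMod d, ((i.val : ZMod m) ∈ W) ∧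
            ∃ n ≤ l i, v = (convMat d a) ^ n *ᵥ (Pi.single i 1 : ZMod d → ℂ)} = ⊤)
      → L ≤ W.card) :=
  stmt9_general d m J L hd W
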